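/- For any m, n ∈ ℕ and any real numbers l, z > 0, |C_{mn,l,z} − C_{m,l,z}| ≪ Σ_{p | n} 1/p, where p runs over the prime divisors of n and the implied constant is absolute. -/

import Mathlib

/-!
Replacing the condition `(d, m) = 1` by `(d, mn) = 1` removes from each of the two sums
defining `C` exactly the terms with `d` in a dyadic range `[x/2, x]` sharing a prime `p` with
`n`. Writing `d = pk`, one has `φ(d) ≥ (p - 1) φ(k) ≥ p φ(k) / 2`, so the terms divisible by
`p` contribute at most `2/p` times a dyadic sum of `1/φ` at `x/p`. Dyadic sums of `1/φ` are
bounded: `d/φ(d) = Σ_{e ∣ rad d} 1/φ(e) ≤ Σ_{e ∣ d} 1/φ(e)`, hence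
`Σ_{x/2 ≤ d ≤ x} 1/φ(d) ≤ (2/x) Σ_{e ≤ x} ⌊x/e⌋/φ(e) ≤ 2 Σ_e 1/(e φ(e))`, and this series
converges because `n ≤ 2 φ(n)²`.
-/

open scoped Classical

/-- `C_{m,l,z} := Σ_{l/2 ≤ d < l, (d,m)=1} 1/φ(d) − Σ_{z/2 < d ≤ z, (d,m)=1} 1/φ(d)`,
the sums being over natural numbers `d`. -/
noncomputable def Cmlz (m : ℕ) (l z : ℝ) : ℝ :=
  (∑ d ∈ (Finset.Icc 1 ⌈l⌉₊).filter
      (fun d : ℕ => l / 2 ≤ (d : ℝ) ∧ (d : ℝ) < l ∧ Nat.Coprime d m), 1 / (Nat.totient d : ℝ)) -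
  (∑ d ∈ (Finset.Icc 1 ⌈z⌉₊).filter
      (fun d : ℕ => z / 2 < (d : ℝ) ∧ (d : ℝ) ≤ z ∧ Nat.Coprime d m), 1 / (Nat.totient d : ℝ))

open Finset ArithmeticFunction UniqueFactorizationMonoid
open scoped Nat ArithmeticFunction.zeta

noncomputable def invTotient : ArithmeticFunction ℝ :=
  ⟨fun n => (φ n : ℝ)⁻¹, by simp⟩

@[simp]
theorem invTotient_apply (n : ℕ) : invTotient n = (φ n : ℝ)⁻¹ := rfl

theorem isMultiplicative_invTotient : invTotient.IsMultiplicative := by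
  rw [IsMultiplicative.iff_ne_zero]
  refine ⟨by simp, fun {m n} _ _ hmn => ?_⟩
  simp [Nat.totient_mul hmn, mul_comm]

theorem div_totient_eq_prod_primeFactors {n : ℕ} (hn : n ≠ 0) :
    (n : ℝ) / φ n = ∏ p ∈ n.primeFactors, (1 + (φ p : ℝ)⁻¹) := by
  have hφp : ∀ p ∈ n.primeFactors, 1 + (φ p : ℝ)⁻¹ = p / φ p := fun p hp => by
    have hp := Nat.prime_of_mem_primeFactors hp
    have : (φ p : ℝ) ≠ 0 := by simp [hp.ne_zero]
    rw [Nat.totient_prime hp, Nat.cast_sub hp.one_le] at this ⊢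
    field_simp
    ring
  have hprod : φ n * ∏ p ∈ n.primeFactors, p = n * ∏ p ∈ n.primeFactors, φ p := by
    rw [Nat.totient_mul_prod_primeFactors]
    exact congrArg _ <| prod_congr rfl fun p hp =>
      (Nat.totient_prime (Nat.prime_of_mem_primeFactors hp)).symm
  rw [prod_congr rfl hφp, prod_div_distrib, div_eq_div_iff (by simp [hn])
    (prod_ne_zero_iff.2 fun p hp => by simp [(Nat.prime_of_mem_primeFactors hp).ne_zero])]
  have := congrArg (Nat.cast : ℕ → ℝ) hprod
  push_cast at this ⊢
  linarith

theorem div_totient_le_sum_divisors_inv_totient (n : ℕ) :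
    (n : ℝ) / φ n ≤ ∑ d ∈ n.divisors, (φ d : ℝ)⁻¹ := by
  rcases eq_or_ne n 0 with rfl | hn
  · simp
  calc (n : ℝ) / φ n = ∏ p ∈ (radical n).primeFactors, (1 + invTotient p) := by
        rw [Nat.primeFactors_radical, div_totient_eq_prod_primeFactors hn]; rfl
    _ = ∑ d ∈ (radical n).divisors, invTotient d :=
        isMultiplicative_invTotient.prodPrimeFactors_one_add_of_squarefree squarefree_radical
    _ ≤ ∑ d ∈ n.divisors, (φ d : ℝ)⁻¹ :=
        sum_le_sum_of_subset_of_nonneg (Nat.divisors_subset_of_dvd hn radical_dvd_self)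
          fun _ _ _ => inv_nonneg.2 (Nat.cast_nonneg _)

theorem sum_Ioc_div_totient_le (N : ℕ) :
    ∑ n ∈ Ioc 0 N, (n : ℝ) / φ n ≤ N * ∑ n ∈ Ioc 0 N, ((n : ℝ) * φ n)⁻¹ := by
  calc ∑ n ∈ Ioc 0 N, (n : ℝ) / φ n ≤ ∑ n ∈ Ioc 0 N, (invTotient * ζ) n :=
        sum_le_sum fun n _ => by
          rw [coe_mul_zeta_apply]; exact div_totient_le_sum_divisors_inv_totient n
    _ = ∑ n ∈ Ioc 0 N, invTotient n * (N / n : ℕ) := sum_Ioc_mul_zeta_eq_sum _ _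
    _ ≤ ∑ n ∈ Ioc 0 N, invTotient n * (N / n : ℝ) := by
        gcongr with n
        · exact inv_nonneg.2 (Nat.cast_nonneg _)
        · exact Nat.cast_div_le
    _ = N * ∑ n ∈ Ioc 0 N, ((n : ℝ) * φ n)⁻¹ := by
        rw [mul_sum]
        refine sum_congr rfl fun n _ => ?_
        simp only [invTotient_apply, mul_inv]
        ring

theorem prod_le_prod_sub_one_sq {s : Finset ℕ} (hs : ∀ p ∈ s, p.Prime ∧ p ≠ 2) :
    ∏ p ∈ s, p ≤ (∏ p ∈ s, (p - 1)) ^ 2 := by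
  rw [← prod_pow]
  refine prod_le_prod' fun p hp => ?_
  have := (hs p hp).1.two_le
  obtain ⟨q, rfl⟩ : ∃ q, p = q + 3 := ⟨p - 3, by have := (hs p hp).2; omega⟩
  rw [show q + 3 - 1 = q + 2 by omega]
  nlinarith

theorem prod_le_two_mul_prod_sub_one_sq {s : Finset ℕ} (hs : ∀ p ∈ s, p.Prime) :
    ∏ p ∈ s, p ≤ 2 * (∏ p ∈ s, (p - 1)) ^ 2 := by
  have hodd := prod_le_prod_sub_one_sq (s := s.erase 2) fun p hp =>
    ⟨hs p (mem_of_mem_erase hp), ne_of_mem_erase hp⟩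
  by_cases h2 : 2 ∈ s
  · rw [← mul_prod_erase s _ h2, ← mul_prod_erase s (· - 1) h2]
    nlinarith
  · rw [erase_eq_of_notMem h2] at hodd
    omega

theorem Nat.le_two_mul_totient_sq (n : ℕ) : n ≤ 2 * φ n ^ 2 := by
  rcases eq_or_ne n 0 with rfl | hn
  · simp
  set r := ∏ p ∈ n.primeFactors, p
  have hr : 0 < r := prod_pos fun p hp => (Nat.prime_of_mem_primeFactors hp).pos
  have hrn : r ≤ n := Nat.le_of_dvd (by omega) (Nat.prod_primeFactors_dvd n)
  have hrad : r ≤ 2 * (∏ p ∈ n.primeFactors, (p - 1)) ^ 2 :=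
    prod_le_two_mul_prod_sub_one_sq fun p hp => Nat.prime_of_mem_primeFactors hp
  have hprod := Nat.totient_mul_prod_primeFactors n
  refine le_of_mul_le_mul_right (a := r ^ 2) ?_ (by positivity)
  calc n * r ^ 2 ≤ n ^ 2 * r := by nlinarith [Nat.mul_le_mul_left (n * r) hrn]
    _ ≤ n ^ 2 * (2 * (∏ p ∈ n.primeFactors, (p - 1)) ^ 2) := by gcongr
    _ = 2 * (n * ∏ p ∈ n.primeFactors, (p - 1)) ^ 2 := by ring
    _ = 2 * φ n ^ 2 * r ^ 2 := by rw [← hprod]; ring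

theorem summable_inv_mul_totient : Summable fun n : ℕ => ((n : ℝ) * φ n)⁻¹ := by
  have hsum := (Real.summable_nat_rpow_inv.2 (by norm_num : (1 : ℝ) < 3 / 2)).mul_left √2
  refine hsum.of_nonneg_of_le (fun n => by positivity) fun n => ?_
  rcases eq_or_ne n 0 with rfl | hn
  · simp
  have hn' : (0 : ℝ) < n := by positivity
  have hφ : (0 : ℝ) < φ n := by simpa using Nat.totient_pos.2 (Nat.pos_of_ne_zero hn)
  have hsqrt : √n ≤ √2 * φ n := by
    rw [← Real.sqrt_sq hφ.le, ← Real.sqrt_mul zero_le_two]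
    exact Real.sqrt_le_sqrt (by exact_mod_cast Nat.le_two_mul_totient_sq n)
  have hrpow : (n : ℝ) ^ (3 / 2 : ℝ) = n * √n := by
    rw [show (3 / 2 : ℝ) = 1 + 1 / 2 by norm_num, Real.rpow_add hn', Real.rpow_one,
      Real.sqrt_eq_rpow]
  rw [hrpow, ← div_eq_mul_inv, le_div_iff₀ (by positivity), inv_mul_le_iff₀ (by positivity)]
  nlinarith [mul_le_mul_of_nonneg_left hsqrt hn'.le]

noncomputable def sumInvMulTotient : ℝ := ∑' n : ℕ, ((n : ℝ) * φ n)⁻¹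

theorem sumInvMulTotient_pos : 0 < sumInvMulTotient :=
  summable_inv_mul_totient.tsum_pos (fun _ => by positivity) 1 (by simp)

theorem sum_inv_totient_le_of_dyadic {x : ℝ} {s : Finset ℕ}
    (hs : ∀ d ∈ s, 0 < d ∧ (d : ℝ) ∈ Set.Icc (x / 2) x) :
    ∑ d ∈ s, (φ d : ℝ)⁻¹ ≤ 2 * sumInvMulTotient := by
  rcases s.eq_empty_or_nonempty with rfl | ⟨d₀, hd₀⟩
  · simpa using sumInvMulTotient_pos.le
  have hx : 0 < x := by
    obtain ⟨hd₀, -, hx⟩ := hs d₀ hd₀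
    exact (Nat.cast_pos.2 hd₀).trans_le hx
  set N := ⌊x⌋₊
  have hsN : s ⊆ Ioc 0 N := fun d hd =>
    mem_Ioc.2 ⟨(hs d hd).1, (Nat.le_floor_iff' (hs d hd).1.ne').2 (hs d hd).2.2⟩
  calc ∑ d ∈ s, (φ d : ℝ)⁻¹
      ≤ ∑ d ∈ s, 2 / x * ((d : ℝ) / φ d) := sum_le_sum fun d hd => by
        obtain ⟨-, hxd, -⟩ := hs d hd
        rw [← mul_div_assoc, ← one_div]
        gcongr
        rw [div_mul_eq_mul_div, le_div_iff₀ hx]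
        linarith
    _ ≤ 2 / x * ∑ d ∈ Ioc 0 N, (d : ℝ) / φ d := by
        rw [← mul_sum]
        gcongr
    _ ≤ 2 / x * (N * ∑ n ∈ Ioc 0 N, ((n : ℝ) * φ n)⁻¹) := by
        gcongr
        exact sum_Ioc_div_totient_le N
    _ ≤ 2 / x * (x * sumInvMulTotient) := by
        gcongr
        · exact Nat.floor_le hx.le
        · exact summable_inv_mul_totient.sum_le_tsum _ fun _ _ => by positivity
    _ = 2 * sumInvMulTotient := by field_simp

theorem prime_mul_totient_le_two_mul_totient_mul {p : ℕ} (hp : p.Prime) (k : ℕ) :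
    p * φ k ≤ 2 * φ (p * k) := by
  have h := Nat.totient_super_multiplicative p k
  rw [Nat.totient_prime hp] at h
  have := hp.two_le
  calc p * φ k ≤ 2 * ((p - 1) * φ k) := by rw [← mul_assoc]; gcongr; omega
    _ ≤ 2 * φ (p * k) := by gcongr

theorem sum_inv_totient_le_of_dyadic_of_dvd {x : ℝ} {p : ℕ} (hp : p.Prime) {s : Finset ℕ}
    (hs : ∀ d ∈ s, 0 < d ∧ (d : ℝ) ∈ Set.Icc (x / 2) x ∧ p ∣ d) :
    ∑ d ∈ s, (φ d : ℝ)⁻¹ ≤ 4 * sumInvMulTotient / p := by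
  have hp₀ : (0 : ℝ) < p := by exact_mod_cast hp.pos
  have hterm : ∀ d ∈ s, (φ d : ℝ)⁻¹ ≤ 2 / p * (φ (d / p) : ℝ)⁻¹ := fun d hd => by
    obtain ⟨hd, -, k, rfl⟩ := hs d hd
    have hk : 0 < φ k := Nat.totient_pos.2 (Nat.pos_of_mul_pos_left hd)
    have h : (p : ℝ) * φ k ≤ 2 * φ (p * k) := by
      exact_mod_cast prime_mul_totient_le_two_mul_totient_mul hp k
    rw [Nat.mul_div_cancel_left k hp.pos,
      show 2 / (p : ℝ) * ((φ k : ℕ) : ℝ)⁻¹ = ((p : ℝ) * (φ k : ℕ) / 2)⁻¹ by field_simp]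
    exact inv_anti₀ (by positivity) (by linarith)
  have himage :
      ∀ k ∈ s.image (· / p), 0 < k ∧ (k : ℝ) ∈ Set.Icc (x / p / 2) (x / p) := by
    simp only [mem_image]
    rintro _ ⟨d, hd, rfl⟩
    obtain ⟨hd, ⟨hxd, hdx⟩, hpd⟩ := hs d hd
    rw [Nat.cast_div hpd hp₀.ne']
    refine ⟨Nat.div_pos (Nat.le_of_dvd hd hpd) hp.pos, ?_, ?_⟩
    · rw [div_right_comm]; gcongr
    · gcongr
  calc ∑ d ∈ s, (φ d : ℝ)⁻¹
      ≤ ∑ d ∈ s, 2 / p * (φ (d / p) : ℝ)⁻¹ := sum_le_sum hterm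
    _ = 2 / p * ∑ k ∈ s.image (· / p), (φ k : ℝ)⁻¹ := by
        rw [mul_sum, sum_image fun a ha b hb hab => ?_]
        rw [← Nat.div_mul_cancel (hs a ha).2.2, ← Nat.div_mul_cancel (hs b hb).2.2]
        exact congrArg (· * p) hab
    _ ≤ 2 / p * (2 * sumInvMulTotient) := by
        gcongr
        exact sum_inv_totient_le_of_dyadic himage
    _ = 4 * sumInvMulTotient / p := by ring

theorem sum_inv_totient_le_of_dyadic_of_not_coprime {x : ℝ} {n : ℕ} (hn : n ≠ 0)
    {s : Finset ℕ} (hs : ∀ d ∈ s, 0 < d ∧ (d : ℝ) ∈ Set.Icc (x / 2) x ∧ ¬ d.Coprime n) :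
    ∑ d ∈ s, (φ d : ℝ)⁻¹ ≤
      4 * sumInvMulTotient * ∑ p ∈ n.primeFactors, (p : ℝ)⁻¹ := by
  calc ∑ d ∈ s, (φ d : ℝ)⁻¹
      ≤ ∑ d ∈ s, ∑ p ∈ n.primeFactors, if p ∣ d then (φ d : ℝ)⁻¹ else 0 :=
        sum_le_sum fun d hd => by
          obtain ⟨p, hp, hpd, hpn⟩ := Nat.Prime.not_coprime_iff_dvd.1 (hs d hd).2.2
          refine le_of_eq_of_le (if_pos hpd).symm <| single_le_sum
            (f := fun p => if p ∣ d then (φ d : ℝ)⁻¹ else 0) (fun _ _ => ?_)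
            (Nat.mem_primeFactors.2 ⟨hp, hpn, hn⟩)
          split_ifs <;> positivity
    _ = ∑ p ∈ n.primeFactors, ∑ d ∈ s with p ∣ d, (φ d : ℝ)⁻¹ := by
        rw [sum_comm]; simp_rw [sum_filter]
    _ ≤ ∑ p ∈ n.primeFactors, 4 * sumInvMulTotient / p :=
        sum_le_sum fun p hp => sum_inv_totient_le_of_dyadic_of_dvd
          (Nat.prime_of_mem_primeFactors hp) fun d hd => by
            obtain ⟨hds, hpd⟩ := mem_filter.1 hd
            exact ⟨(hs d hds).1, (hs d hds).2.1, hpd⟩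
    _ = 4 * sumInvMulTotient * ∑ p ∈ n.primeFactors, (p : ℝ)⁻¹ := by
        rw [mul_sum]; rfl

theorem sum_filter_coprime_mul (t : Finset ℕ) (P : ℕ → Prop) [DecidablePred P]
    (g : ℕ → ℝ) (m n : ℕ) :
    ∑ d ∈ t with P d ∧ d.Coprime (m * n), g d =
      ∑ d ∈ t with P d ∧ d.Coprime m, g d -
        ∑ d ∈ t with (P d ∧ d.Coprime m) ∧ ¬ d.Coprime n, g d := by
  rw [eq_sub_iff_add_eq, ← sum_filter_add_sum_filter_not {d ∈ t | P d ∧ d.Coprime m}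
    (fun d => d.Coprime n), filter_filter, filter_filter]
  simp only [Nat.coprime_mul_iff_right, and_assoc]

theorem statement_5 :
    ∃ C : ℝ, 0 < C ∧ ∀ (m n : ℕ) (l z : ℝ), 1 ≤ m → 1 ≤ n → 0 < l → 0 < z →
      |Cmlz (m * n) l z - Cmlz m l z| ≤ C * ∑ p ∈ n.primeFactors, 1 / (p : ℝ) := by
  refine ⟨4 * sumInvMulTotient, by linarith [sumInvMulTotient_pos],
    fun m n l z _ hn _ _ => ?_⟩
  simp only [Cmlz, ← and_assoc, sum_filter_coprime_mul, one_div]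
  rw [show ∀ a α b β : ℝ, a - α - (b - β) - (a - b) = β - α by intros; ring]
  refine abs_sub_le_of_nonneg_of_le (sum_nonneg fun _ _ => by positivity) ?_
    (sum_nonneg fun _ _ => by positivity) ?_
  · refine sum_inv_totient_le_of_dyadic_of_not_coprime (x := z) (by omega) fun d hd => ?_
    simp only [mem_filter, mem_Icc] at hd
    exact ⟨hd.1.1, ⟨hd.2.1.1.1.le, hd.2.1.1.2⟩, hd.2.2⟩
  · refine sum_inv_totient_le_of_dyadic_of_not_coprime (x := l) (by omega) fun d hd => ?_
    simp only [mem_filter, mem_Icc] at hd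
    exact ⟨hd.1.1, ⟨hd.2.1.1.1, hd.2.1.1.2.le⟩, hd.2.2⟩
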